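/- For every ordinal α and S ⊆ ℕ^ℕ: S is guessable with fewer than α mind changes if and only if S_α = ∅. -/

import Mathlib

open Filter Topology Classical

/-- The initial segment `f↾n` of an infinite sequence. -/
def res (f : ℕ → ℕ) (n : ℕ) : List ℕ := List.ofFn (fun i : Fin n => f i)

/-- `[X]`: the set of infinite sequences all of whose finite initial segments lie in `X`. -/
def seqsIn (X : Set (List ℕ)) : Set (ℕ → ℕ) := {f | ∀ n, res f n ∈ X}

/-- The simplified remainder `S_α`. -/
noncomputable def SRem (S : Set (ℕ → ℕ)) (α : Ordinal.{0}) : Set (List ℕ) :=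
  Ordinal.limitRecOn α Set.univ
    (fun _ prev => {x | x ∈ prev ∧ ∃ f g : ℕ → ℕ,
      f ∈ seqsIn prev ∧ g ∈ seqsIn prev ∧ res f x.length = x ∧ res g x.length = x ∧
      f ∈ S ∧ g ∉ S})
    (fun _ _ ih => ⋂ (β : Ordinal.{0}) (h : β < _), ih β h)

/-- Wadge's remainder `Rm_μ(A,B)`. -/
noncomputable def Rm (A B : Set (ℕ → ℕ)) (μ : Ordinal.{0}) : Set (ℕ → ℕ) :=
  if μ = 0 then Set.univ
  else ⋂ (ν : {ν : Ordinal.{0} // ν < μ}),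
    closure (Rm A B ν.1 ∩ A) ∩ closure (Rm A B ν.1 ∩ B)
termination_by μ
decreasing_by exact ν.2

/-- The least ordinal at which the simplified remainders stabilize. -/
noncomputable def alphaS (S : Set (ℕ → ℕ)) : Ordinal.{0} :=
  sInf {α | SRem S α = SRem S (α + 1)}

/-- `S_∞`, the stable value of the simplified remainders. -/
noncomputable def Sinf (S : Set (ℕ → ℕ)) : Set (List ℕ) := SRem S (alphaS S)

/-- `β(σ)`: the least ordinal `γ` with `σ ∉ S_γ`. -/
noncomputable def betaOf (S : Set (ℕ → ℕ)) (σ : List ℕ) : Ordinal.{0} :=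
  sInf {γ | σ ∉ SRem S γ}

/-- `G` guesses `S`. -/
def Guesses (G : List ℕ → Bool) (S : Set (ℕ → ℕ)) : Prop :=
  ∀ f : ℕ → ℕ, ∀ᶠ n in atTop, (G (res f n) = true ↔ f ∈ S)

def Guessable (S : Set (ℕ → ℕ)) : Prop := ∃ G, Guesses G S

/-- `G, H` witness that `S` is guessable with `< α` mind changes. -/
def WitnessMC (S : Set (ℕ → ℕ)) (α : Ordinal.{0}) (G : List ℕ → Bool)
    (H : List ℕ → Ordinal.{0}) : Prop :=
  Guesses G S ∧ (∀ σ, H σ < α) ∧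
  (∀ (f : ℕ → ℕ) (n : ℕ), H (res f (n + 1)) ≤ H (res f n)) ∧
  (∀ (f : ℕ → ℕ) (n : ℕ), G (res f (n + 1)) ≠ G (res f n) →
    H (res f (n + 1)) < H (res f n))

def GuessableMC (S : Set (ℕ → ℕ)) (α : Ordinal.{0}) : Prop := ∃ G H, WitnessMC S α G H

/-- An ordinal is even if it is of the form `λ + n` with `λ` limit or zero and `n` even. -/
def OrdEven (o : Ordinal.{0}) : Prop :=
  ∃ (l : Ordinal.{0}) (n : ℕ), (l = 0 ∨ Order.IsSuccLimit l) ∧ o = l + n ∧ Even n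

/-- The Hausdorff difference set `D_α((A_η)_{η<α})`. -/
def DSet (α : Ordinal.{0}) (A : Ordinal.{0} → Set (ℕ → ℕ)) : Set (ℕ → ℕ) :=
  {x | ∃ η, η < α ∧ x ∈ A η ∧ (∀ η', η' < η → x ∉ A η') ∧ (OrdEven η ↔ ¬ OrdEven α)}

/-- Membership in the class `D_α(Σ⁰₁)`. -/
def InDiff (α : Ordinal.{0}) (S : Set (ℕ → ℕ)) : Prop :=
  ∃ A : Ordinal.{0} → Set (ℕ → ℕ), (∀ η, η < α → IsOpen (A η)) ∧
    (∀ η η', η ≤ η' → η' < α → A η ⊆ A η') ∧ S = DSet α A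
/-- Wadge's `Rm_Ω(S)`: the stable value of `Rm_μ(S, Sᶜ)`. -/
noncomputable def RmInf (S : Set (ℕ → ℕ)) : Set (ℕ → ℕ) :=
  Rm S Sᶜ (sInf {μ : Ordinal.{0} | Rm S Sᶜ μ = Rm S Sᶜ (μ + 1)})

/-- The canonical guesser `G_S`. -/
noncomputable def GS (S : Set (ℕ → ℕ)) (σ : List ℕ) : Bool :=
  if (∃ f : ℕ → ℕ, res f σ.length = σ ∧ f ∈ seqsIn (SRem S (betaOf S σ - 1))) then
    decide (∃ f : ℕ → ℕ, res f σ.length = σ ∧ f ∈ seqsIn (SRem S (betaOf S σ - 1)) ∧ f ∈ S)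
  else if h : σ = [] then false
  else GS S σ.dropLast
termination_by σ.length
decreasing_by
  simp only [List.length_dropLast]
  exact Nat.sub_lt (List.length_pos_iff.mpr h) one_pos

/-- `S` is `F_σ`: a countable union of closed sets. -/
def IsFsigma (S : Set (ℕ → ℕ)) : Prop :=
  ∃ C : ℕ → Set (ℕ → ℕ), (∀ n, IsClosed (C n)) ∧ S = ⋃ n, C n

/-- Boolean combinations of open sets. -/
inductive BoolComb : Set (ℕ → ℕ) → Prop
  | isOpen {s : Set (ℕ → ℕ)} : IsOpen s → BoolComb s
  | compl {s : Set (ℕ → ℕ)} : BoolComb s → BoolComb sᶜ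
  | union {s t : Set (ℕ → ℕ)} : BoolComb s → BoolComb t → BoolComb (s ∪ t)

/-- The Borel class `Σ⁰_α` on Baire space (for `α ≥ 1`). -/
noncomputable def Sigma0 (α : Ordinal.{0}) : Set (Set (ℕ → ℕ)) :=
  if α = 1 then {s | IsOpen s}
  else {s | ∃ g : ℕ → Set (ℕ → ℕ), s = ⋃ n, g n ∧
    ∀ n, ∃ β : {β : Ordinal.{0} // β < α}, 1 ≤ β.1 ∧ (g n)ᶜ ∈ Sigma0 β.1}
termination_by α
decreasing_by exact β.2

/-- The ambiguous Borel class `Δ⁰_α`. -/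
noncomputable def Delta0 (α : Ordinal.{0}) : Set (Set (ℕ → ℕ)) :=
  {s | s ∈ Sigma0 α ∧ sᶜ ∈ Sigma0 α}

/-- The Boolean characteristic function. -/
noncomputable def chi (X : Set (ℕ → ℕ)) (f : ℕ → ℕ) : Bool := decide (f ∈ X)

/-- `G` guesses `S` based on the sequence of sets `Ss`. -/
def GuessesBased (G : List Bool → Bool) (Ss : ℕ → Set (ℕ → ℕ)) (S : Set (ℕ → ℕ)) : Prop :=
  ∀ f : ℕ → ℕ, ∀ᶠ n in atTop,
    (G (List.ofFn (fun i : Fin n => chi (Ss i) f)) = true ↔ f ∈ S)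

/-- `S` is `μ`th-order guessable. -/
def HigherGuessable (μ : Ordinal.{0}) (S : Set (ℕ → ℕ)) : Prop :=
  ∃ Ss : ℕ → Set (ℕ → ℕ), (∀ i, ∃ μi, μi < μ ∧ Ss i ∈ Delta0 (μi + 1)) ∧
    ∃ G : List Bool → Bool, GuessesBased G Ss S

/-!
If `(G, H)` witnesses guessability with ordinal mind-change counter `H`, then `β ≤ H σ` for every
`σ ∈ S_β`. At a successor stage `β = δ + 1` there are branches of `[S_δ]` through `σ`, one in `S`
and one outside, so along one of them the guess changes somewhere above `σ`; there the counter
drops strictly from a value `≥ δ` (by induction), hence `H σ > δ`. So `H < α` forces `S_α = ∅`.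

Conversely, if `S_α = ∅` every `σ` has a rank `γ < α` with `σ ∈ S_γ \ S_{γ+1}`, and all branches of
`[S_γ]` through `σ` are on the same side of `S`. Guessing that side changes the guess only where
the rank drops. Along any `f` the rank is eventually constant, equal to its minimum `γ`; then
`f ∈ [S_γ]`, so the guess is eventually correct.
-/

section Restriction

lemma res_length (f : ℕ → ℕ) (n : ℕ) : (res f n).length = n := by simp [res]

lemma res_take (f : ℕ → ℕ) {m n : ℕ} (h : m ≤ n) : (res f n).take m = res f m := by
  apply List.ext_getElem <;> simp [res, h]

lemma res_eq_res_of_le {f g : ℕ → ℕ} {m n : ℕ} (h : res f n = res g n) (hmn : m ≤ n) :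
    res f m = res g m := by
  rw [← res_take f hmn, h, res_take g hmn]

lemma res_succ_dropLast (f : ℕ → ℕ) (n : ℕ) : (res f (n + 1)).dropLast = res f n := by
  rw [List.dropLast_eq_take, res_length]
  exact res_take f n.le_succ

end Restriction

section Remainder

variable {S : Set (ℕ → ℕ)}

@[simp]
lemma SRem_zero (S : Set (ℕ → ℕ)) : SRem S 0 = Set.univ := by
  simp [SRem]

lemma SRem_add_one (S : Set (ℕ → ℕ)) (β : Ordinal.{0}) :
    SRem S (β + 1) = {x | x ∈ SRem S β ∧ ∃ f g : ℕ → ℕ,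
      f ∈ seqsIn (SRem S β) ∧ g ∈ seqsIn (SRem S β) ∧ res f x.length = x ∧
      res g x.length = x ∧ f ∈ S ∧ g ∉ S} := by
  rw [SRem, Ordinal.limitRecOn_add_one]
  rfl

lemma SRem_of_isSuccLimit (S : Set (ℕ → ℕ)) {β : Ordinal.{0}} (hβ : Order.IsSuccLimit β) :
    SRem S β = ⋂ γ < β, SRem S γ := by
  rw [SRem, Ordinal.limitRecOn_limit _ _ _ _ hβ]
  rfl

lemma SRem_antitone (S : Set (ℕ → ℕ)) : Antitone (SRem S) := by
  intro β γ hβγ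
  induction γ using Ordinal.limitRecOn with
  | zero => rw [nonpos_iff_eq_zero.mp hβγ]
  | add_one γ ih =>
    rcases hβγ.lt_or_eq with hlt | rfl
    · exact fun x hx => ih (Order.lt_add_one_iff.mp hlt) ((SRem_add_one S γ).le hx).1
    · rfl
  | limit γ hγ ih =>
    rcases hβγ.lt_or_eq with hlt | rfl
    · rw [SRem_of_isSuccLimit S hγ]
      exact Set.biInter_subset_of_mem hlt
    · rfl

lemma res_mem_SRem_of_le {f : ℕ → ℕ} {m n : ℕ} (hmn : m ≤ n) {γ : Ordinal.{0}}
    (h : res f n ∈ SRem S γ) : res f m ∈ SRem S γ := by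
  induction γ using Ordinal.limitRecOn with
  | zero => simp
  | add_one γ ih =>
    rw [SRem_add_one, Set.mem_ofPred_eq, res_length] at h ⊢
    obtain ⟨hγ, g, g', hg, hg', hgf, hg'f, hgS, hg'S⟩ := h
    exact ⟨ih hγ, g, g', hg, hg', res_eq_res_of_le hgf hmn, res_eq_res_of_le hg'f hmn, hgS, hg'S⟩
  | limit γ hγ ih =>
    rw [SRem_of_isSuccLimit S hγ, Set.mem_iInter₂] at h ⊢
    exact fun β hβ => ih β hβ (h β hβ)

end Remainder

lemma exists_succ_ne_of_ne {β : Type*} (u : ℕ → β) {m n : ℕ} (hmn : m ≤ n) (h : u n ≠ u m) :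
    ∃ k, m ≤ k ∧ u (k + 1) ≠ u k := by
  contrapose! h
  induction n, hmn using Nat.le_induction with
  | base => rfl
  | succ n hmn ih => rw [h n hmn, ih]

section MindChanges

variable {S : Set (ℕ → ℕ)} {G : List ℕ → Bool} {H : List ℕ → Ordinal.{0}}

lemma exists_mind_change (hG : Guesses G S) {σ : List ℕ} {f g : ℕ → ℕ}
    (hf : res f σ.length = σ) (hg : res g σ.length = σ) (hfS : f ∈ S) (hgS : g ∉ S) :
    ∃ h ∈ ({f, g} : Set (ℕ → ℕ)), ∃ k, σ.length ≤ k ∧ G (res h (k + 1)) ≠ G (res h k) := by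
  have eventually_ne {h : ℕ → ℕ} (hσ : res h σ.length = σ)
      (hev : ∀ᶠ n in atTop, G (res h n) ≠ G σ) :
      ∃ k, σ.length ≤ k ∧ G (res h (k + 1)) ≠ G (res h k) := by
    obtain ⟨n, hne, hn⟩ := (hev.and (eventually_ge_atTop σ.length)).exists
    exact exists_succ_ne_of_ne (fun k => G (res h k)) hn (by rwa [hσ])
  cases hσ : G σ
  · refine ⟨f, by simp, eventually_ne hf ?_⟩
    filter_upwards [hG f] with n hn
    simpa [hσ] using hn.mpr hfS
  · refine ⟨g, by simp, eventually_ne hg ?_⟩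
    filter_upwards [hG g] with n hn
    simpa [hσ] using hgS ∘ hn.mp

lemma le_of_mem_SRem (hG : Guesses G S)
    (hanti : ∀ f n, H (res f (n + 1)) ≤ H (res f n))
    (hchange : ∀ f n, G (res f (n + 1)) ≠ G (res f n) → H (res f (n + 1)) < H (res f n))
    {β : Ordinal.{0}} {σ : List ℕ} (hσ : σ ∈ SRem S β) : β ≤ H σ := by
  induction β using Ordinal.limitRecOn generalizing σ with
  | zero => exact zero_le
  | add_one β ih =>
    obtain ⟨-, f, g, hf, hg, hfσ, hgσ, hfS, hgS⟩ := (SRem_add_one S β).le hσ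
    obtain ⟨h, hh, k, hk, hne⟩ := exists_mind_change hG hfσ hgσ hfS hgS
    have hhβ : h ∈ seqsIn (SRem S β) := by rcases hh with rfl | rfl <;> assumption
    have hhσ : res h σ.length = σ := by rcases hh with rfl | rfl <;> assumption
    rw [Order.add_one_le_iff]
    calc β ≤ H (res h (k + 1)) := ih (hhβ (k + 1))
      _ < H (res h k) := hchange h k hne
      _ ≤ H (res h σ.length) := antitone_nat_of_succ_le (f := fun n => H (res h n)) (hanti h) hk
      _ = H σ := by rw [hhσ]
  | limit β hβ ih =>
    rw [SRem_of_isSuccLimit S hβ, Set.mem_iInter₂] at hσ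
    exact le_of_forall_lt fun γ hγ =>
      (lt_add_one γ).trans_le (ih (γ + 1) (hβ.add_one_lt hγ) (hσ _ (hβ.add_one_lt hγ)))

end MindChanges

section Rank

variable {S : Set (ℕ → ℕ)}

lemma exists_lt_notMem_SRem_add_one {σ : List ℕ} {β : Ordinal.{0}} (hσ : σ ∉ SRem S β) :
    ∃ γ < β, σ ∉ SRem S (γ + 1) := by
  induction β using Ordinal.limitRecOn with
  | zero => simp at hσ
  | add_one β _ => exact ⟨β, lt_add_one β, hσ⟩
  | limit β hβ ih =>
    rw [SRem_of_isSuccLimit S hβ, Set.mem_iInter₂] at hσ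
    push Not at hσ
    obtain ⟨β', hβ', hσβ'⟩ := hσ
    obtain ⟨γ, hγ, hσγ⟩ := ih β' hβ' hσβ'
    exact ⟨γ, hγ.trans hβ', hσγ⟩

/-- The predecessor of the paper's `β(σ)` (not `β(σ) - 1`: ordinal subtraction gives
`(ω + 1) - 1 = ω + 1`). -/
noncomputable def remRank (S : Set (ℕ → ℕ)) (σ : List ℕ) : Ordinal.{0} :=
  sInf {γ | σ ∉ SRem S (γ + 1)}

lemma mem_SRem_remRank (σ : List ℕ) : σ ∈ SRem S (remRank S σ) := by
  by_contra hσ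
  obtain ⟨γ, hγ, hσγ⟩ := exists_lt_notMem_SRem_add_one hσ
  exact notMem_of_lt_csInf' hγ hσγ

lemma notMem_SRem_remRank_add_one {σ : List ℕ} {β : Ordinal.{0}} (hσ : σ ∉ SRem S β) :
    σ ∉ SRem S (remRank S σ + 1) :=
  let ⟨γ, _, hσγ⟩ := exists_lt_notMem_SRem_add_one hσ
  csInf_mem (s := {γ | σ ∉ SRem S (γ + 1)}) ⟨γ, hσγ⟩

lemma remRank_lt {σ : List ℕ} {β : Ordinal.{0}} (hσ : σ ∉ SRem S β) : remRank S σ < β :=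
  let ⟨_, hγ, hσγ⟩ := exists_lt_notMem_SRem_add_one hσ
  (csInf_le' hσγ).trans_lt hγ

lemma remRank_res_le {f : ℕ → ℕ} {m n : ℕ} (hmn : m ≤ n) {β : Ordinal.{0}}
    (hσ : res f m ∉ SRem S β) : remRank S (res f n) ≤ remRank S (res f m) :=
  csInf_le' fun h => notMem_SRem_remRank_add_one hσ (res_mem_SRem_of_le hmn h)

lemma mem_iff_of_mem_SRem_of_notMem_SRem_add_one {σ : List ℕ} {γ : Ordinal.{0}}
    (hσγ : σ ∈ SRem S γ) (hσγ' : σ ∉ SRem S (γ + 1)) {f g : ℕ → ℕ}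
    (hf : f ∈ seqsIn (SRem S γ)) (hg : g ∈ seqsIn (SRem S γ))
    (hfσ : res f σ.length = σ) (hgσ : res g σ.length = σ) : f ∈ S ↔ g ∈ S := by
  refine ⟨fun hfS => ?_, fun hgS => ?_⟩ <;> by_contra hS' <;> apply hσγ' <;> rw [SRem_add_one]
  · exact ⟨hσγ, f, g, hf, hg, hfσ, hgσ, hfS, hS'⟩
  · exact ⟨hσγ, g, f, hg, hf, hgσ, hfσ, hgS, hS'⟩

end Rank

section Guesser

variable {S : Set (ℕ → ℕ)}

/-- The branches through `σ` that stay in `S_γ`, `γ` the rank of `σ`, are all in `S` or all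
outside `S`: guess accordingly, and if there are none, keep the guess made at the parent. -/
noncomputable def remGuess (S : Set (ℕ → ℕ)) (σ : List ℕ) : Bool :=
  if ∃ f ∈ seqsIn (SRem S (remRank S σ)), res f σ.length = σ then
    decide (∃ f ∈ seqsIn (SRem S (remRank S σ)), res f σ.length = σ ∧ f ∈ S)
  else if σ = [] then false
  else remGuess S σ.dropLast
termination_by σ.length
decreasing_by
  rw [List.length_dropLast]
  exact Nat.sub_lt (List.length_pos_iff.mpr ‹_›) one_pos

lemma remGuess_eq_decide {σ : List ℕ} {β : Ordinal.{0}} (hσ : σ ∉ SRem S β) {f : ℕ → ℕ}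
    (hf : f ∈ seqsIn (SRem S (remRank S σ))) (hfσ : res f σ.length = σ) :
    remGuess S σ = decide (f ∈ S) := by
  rw [remGuess, if_pos ⟨f, hf, hfσ⟩, decide_eq_decide]
  refine ⟨fun ⟨g, hg, hgσ, hgS⟩ => ?_, fun hfS => ⟨f, hf, hfσ, hfS⟩⟩
  exact (mem_iff_of_mem_SRem_of_notMem_SRem_add_one (mem_SRem_remRank σ)
    (notMem_SRem_remRank_add_one hσ) hf hg hfσ hgσ).mpr hgS

lemma remGuess_res_add_one_of_remRank_eq {α : Ordinal.{0}} (hS : SRem S α = ∅)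
    {f : ℕ → ℕ} {n : ℕ} (h : remRank S (res f (n + 1)) = remRank S (res f n)) :
    remGuess S (res f (n + 1)) = remGuess S (res f n) := by
  have hσ : ∀ σ, σ ∉ SRem S α := by simp [hS]
  by_cases hext :
      ∃ g ∈ seqsIn (SRem S (remRank S (res f (n + 1)))), res g (n + 1) = res f (n + 1)
  · obtain ⟨g, hg, hgf⟩ := hext
    rw [remGuess_eq_decide (hσ _) hg (by rwa [res_length]),
      remGuess_eq_decide (hσ _) (h ▸ hg) (by rw [res_length]; exact res_eq_res_of_le hgf n.le_succ)]
  · have hne : res f (n + 1) ≠ [] := by simp [← List.length_eq_zero_iff, res_length]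
    rw [remGuess, if_neg (by rwa [res_length]), if_neg hne, res_succ_dropLast]

lemma remGuess_guesses {α : Ordinal.{0}} (hS : SRem S α = ∅) : Guesses (remGuess S) S := by
  have hσ : ∀ σ, σ ∉ SRem S α := by simp [hS]
  intro f
  obtain ⟨N, hN⟩ := csInf_mem (Set.range_nonempty fun n => remRank S (res f n))
  have hmin (n : ℕ) : remRank S (res f N) ≤ remRank S (res f n) :=
    hN.trans_le (csInf_le' ⟨n, rfl⟩)
  have hfN : f ∈ seqsIn (SRem S (remRank S (res f N))) := fun n =>
    SRem_antitone S (hmin n) (mem_SRem_remRank _)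
  filter_upwards [eventually_ge_atTop N] with n hn
  have hrank : remRank S (res f n) = remRank S (res f N) :=
    le_antisymm (remRank_res_le hn (hσ _)) (hmin n)
  rw [remGuess_eq_decide (hσ _) (hrank ▸ hfN) (by rw [res_length]), decide_eq_true_iff]

end Guesser

theorem stmt8 (S : Set (ℕ → ℕ)) (α : Ordinal.{0}) :
    GuessableMC S α ↔ SRem S α = ∅ := by
  constructor
  · rintro ⟨G, H, hG, hHα, hanti, hchange⟩
    exact Set.eq_empty_of_forall_notMem fun σ hσ =>
      (hHα σ).not_ge (le_of_mem_SRem hG hanti hchange hσ)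
  · intro hS
    have hσ : ∀ σ, σ ∉ SRem S α := by simp [hS]
    refine ⟨remGuess S, remRank S, remGuess_guesses hS, fun σ => remRank_lt (hσ σ),
      fun f n => remRank_res_le n.le_succ (hσ _), fun f n hne => ?_⟩
    exact (remRank_res_le n.le_succ (hσ _)).lt_of_ne
      fun h => hne (remGuess_res_add_one_of_remRank_eq hS h)
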